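/- If (1−H/2)/(3−2H) < β < 1/2, then for each q > 0, P( sup_{0≤s≤T} | ∫_{−ε_n}^{0} ∂_x f_s(1/u) u^{−3} B₃(u) du | > α_n ) = o(n^{−q}) as n → ∞. -/

import Mathlib

/- Formalization of results from "A strong convergence to the Rosenblatt process"
by J. Garzón, S. Torres and C.A. Tudor.

Conventions used throughout:
* Brownian motions are encoded by the predicates `IsTwoSidedBM` / `IsBM` below.
* Wiener integrals of `C¹` deterministic integrands and pathwise Riemann–Stieltjes
  integrals against the (piecewise linear) transport processes are both encoded via
  the integration-by-parts formula (`rsInt`), with which they coincide (a.s. in the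
  Wiener case).
* Double Wiener–Itô integrals (the processes `X^{2,H}`, `X^{3,H}` and the Rosenblatt
  process itself) are characterized as `L²(P)`-limits of their natural
  `ε`-regularizations, in which the singular kernel `(s-x)^{H/2-1}` is replaced by
  `(s+ε-x)^{H/2-1}` and the diagonal trace term is subtracted. -/

open MeasureTheory ProbabilityTheory Real Filter Set Asymptotics
open scoped ENNReal NNReal

noncomputable section

variable {Ω : Type*} [MeasurableSpace Ω]

/-- A two-sided standard Brownian motion indexed by `ℝ` on the probability space
`(Ω, P)`: it vanishes at `0`, has a.s. continuous paths, Gaussian increments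
`B t - B s ~ N(0, t-s)` for `s ≤ t`, and independent increments. -/
def IsTwoSidedBM (P : Measure Ω) (B : ℝ → Ω → ℝ) : Prop :=
  (∀ t, Measurable (B t)) ∧
  (∀ᵐ ω ∂P, B 0 ω = 0) ∧
  (∀ᵐ ω ∂P, Continuous fun t => B t ω) ∧
  (∀ s t : ℝ, s ≤ t →
    P.map (fun ω => B t ω - B s ω) = gaussianReal 0 (Real.toNNReal (t - s))) ∧
  (∀ (n : ℕ) (u : Fin (n + 1) → ℝ), Monotone u →
    iIndepFun
      (fun i : Fin n => fun ω => B (u i.succ) ω - B (u i.castSucc) ω) P)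

/-- A standard Brownian motion on `[0, ∞)` on the probability space `(Ω, P)`. -/
def IsBM (P : Measure Ω) (B : ℝ → Ω → ℝ) : Prop :=
  (∀ t, Measurable (B t)) ∧
  (∀ᵐ ω ∂P, B 0 ω = 0) ∧
  (∀ᵐ ω ∂P, ContinuousOn (fun t => B t ω) (Ici 0)) ∧
  (∀ s t : ℝ, 0 ≤ s → s ≤ t →
    P.map (fun ω => B t ω - B s ω) = gaussianReal 0 (Real.toNNReal (t - s))) ∧
  (∀ (n : ℕ) (u : Fin (n + 1) → ℝ), Monotone u → 0 ≤ u 0 →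
    iIndepFun
      (fun i : Fin n => fun ω => B (u i.succ) ω - B (u i.castSucc) ω) P)

/-- `Z` is a uniform transport process of parameter `n`: starting from `0` it moves with
velocity `±n` (the initial sign `V` being uniform on `{-1, 1}`), and it reverses its
velocity at the partial sums of an i.i.d. sequence `ξ` of exponential waiting times of
parameter `n²`, with `V` and the `ξ k` all independent. -/
def IsUniformTransport (P : Measure Ω) (n : ℕ) (Z : ℝ → Ω → ℝ) : Prop :=
  ∃ (V : Ω → ℝ) (ξ : ℕ → Ω → ℝ),
    Measurable V ∧ (∀ k, Measurable (ξ k)) ∧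
    P.map V = (1 / 2 : ℝ≥0∞) • Measure.dirac (1 : ℝ) +
      (1 / 2 : ℝ≥0∞) • Measure.dirac (-1 : ℝ) ∧
    (∀ k, P.map (ξ k) = expMeasure ((n : ℝ) ^ 2)) ∧
    iIndepFun
      (fun i : Option ℕ => Option.elim i V ξ) P ∧
    ∀ ω, ∀ t : ℝ, Z t ω =
      ∫ s in (0 : ℝ)..t, (n : ℝ) * V ω *
        (-1 : ℝ) ^ (Set.ncard {k : ℕ | ∑ j ∈ Finset.range (k + 1), ξ j ω ≤ s})

/-- The sequence `ε_n = n^{-β/(1-H/2)}`. -/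
def epsSeq (H β : ℝ) (n : ℕ) : ℝ := (n : ℝ) ^ (-(β / (1 - H / 2)))

/-- The rate `α_n = n^{-(1/2-β)} (log n)^{5/2}`. -/
def alphaRate (β : ℝ) (n : ℕ) : ℝ :=
  (n : ℝ) ^ (-(1 / 2 - β)) * Real.log n ^ ((5 : ℝ) / 2)

/-- The rate `n^{-(1/2-β-γ)} (log n)^{5/2}`. -/
def alphaRate2 (β γ : ℝ) (n : ℕ) : ℝ :=
  (n : ℝ) ^ (-(1 / 2 - β - γ)) * Real.log n ^ ((5 : ℝ) / 2)

/-- The kernel `f_s(x) = (s-x)^{H/2-1}`. -/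
def kf (H s x : ℝ) : ℝ := (s - x) ^ (H / 2 - 1)

/-- Its derivative in `x`: `∂_x f_s(x) = (1-H/2)(s-x)^{H/2-2}`. -/
def kdf (H s x : ℝ) : ℝ := (1 - H / 2) * (s - x) ^ (H / 2 - 2)

/-- Pathwise Riemann–Stieltjes integral `∫_c^d g dZ` of a `C¹` integrand `g`
(with derivative `dg`) against a path `Z`, encoded through the
integration-by-parts formula; for such integrands this coincides with the pathwise
Riemann–Stieltjes integral when `Z` is continuous of bounded variation, and a.s. with
the Wiener integral when `Z` is a Brownian path. -/
def rsInt (g dg Z : ℝ → ℝ) (c d : ℝ) : ℝ :=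
  g d * Z d - g c * Z c - ∫ x in c..d, dg x * Z x

/-- Pathwise version (via integration by parts, using `B 0 = 0` a.s. and the decay
of `f` and of `B` at `-∞`) of the Wiener integral
`Y^{1,H}_s = ∫_{-∞}^0 (s-x)^{H/2-1} dB(x)`. -/
def Y1 (H : ℝ) (B : ℝ → Ω → ℝ) (s : ℝ) (ω : Ω) : ℝ :=
  kf H s 0 * B 0 ω - ∫ x in Iic (0 : ℝ), kdf H s x * B x ω

/-- The time-inverted Brownian motion `B₃(u) = u B(1/u)` (with `B₃(0) = 0`,
automatic here since `1/0 = 0` and the prefactor vanishes). -/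
def B3 (B : ℝ → Ω → ℝ) (u : ℝ) (ω : Ω) : ℝ := u * B (1 / u) ω

/-- The approximating process `Y^{1,H,n}` built from the transport processes `Z₂, Z₃`. -/
def Y1n (H β a : ℝ) (Z₂ Z₃ : ℝ → Ω → ℝ) (n : ℕ) (s : ℝ) (ω : Ω) : ℝ :=
  kf H s a * Z₂ a ω
  - ∫ u in (1 / a)..(-(epsSeq H β n)), kdf H s (1 / u) * (u ^ 3)⁻¹ * Z₃ u ω
  + rsInt (kf H s) (kdf H s) (fun x => Z₂ x ω) a (-(epsSeq H β n))
  + rsInt (fun x => kf H s (x - epsSeq H β n)) (fun x => kdf H s (x - epsSeq H β n))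
      (fun x => Z₂ x ω) (-(epsSeq H β n)) 0

/-- Pathwise version of `∫_0^s (s+ε-x)^{H/2-1} dW(x)` (integration by parts); used
both for `Y^{3,H}` (with `W` a Brownian motion, Wiener integral) and for `Y^{3,H,n}`
(with `W` a transport process, pathwise Riemann–Stieltjes integral). -/
def Y3e (H ε : ℝ) (W : ℝ → Ω → ℝ) (s : ℝ) (ω : Ω) : ℝ :=
  rsInt (fun x => (s + ε - x) ^ (H / 2 - 1))
    (fun x => (1 - H / 2) * (s + ε - x) ^ (H / 2 - 2)) (fun x => W x ω) 0 s

/-- The strong approximation rate hypothesis (eq. (3.2) of the paper): for each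
`q > 0`, `P( sup_{t ∈ [c,d]} |X t - Z^{(n)} t| > C n^{-1/2} (log n)^{5/2} ) = o(n^{-q})`
as `n → ∞`, for some constant `C > 0`. -/
def ApproxRate (P : Measure Ω) (X : ℝ → Ω → ℝ) (Z : ℕ → ℝ → Ω → ℝ) (c d : ℝ) : Prop :=
  ∀ q : ℝ, 0 < q → ∃ C : ℝ, 0 < C ∧
    (fun n : ℕ =>
      (P {ω | C * (n : ℝ) ^ (-(1 : ℝ) / 2) * Real.log n ^ ((5 : ℝ) / 2) <
        ⨆ t ∈ Icc c d, |X t ω - Z n t ω|}).toReal)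
    =o[atTop] fun n : ℕ => (n : ℝ) ^ (-q)

/-- `X^{1,H}_t = c(H) ∫_0^t (Y^{1,H}_s)² ds`. -/
def X1 (H cH : ℝ) (B : ℝ → Ω → ℝ) (t : ℝ) (ω : Ω) : ℝ :=
  cH * ∫ s in (0 : ℝ)..t, (Y1 H B s ω) ^ 2

/-- `X^{1,H,n}_t = c(H) ∫_0^t (Y^{1,H,n}_s)² ds`. -/
def X1n (H β a cH : ℝ) (Z₂ Z₃ : ℝ → Ω → ℝ) (n : ℕ) (t : ℝ) (ω : Ω) : ℝ :=
  cH * ∫ s in (0 : ℝ)..t, (Y1n H β a Z₂ Z₃ n s ω) ^ 2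

/-- `X^{3,H,n}_t = c(H) ∫_0^t (Y^{3,H,n}_s)² ds`. -/
def X3n (H β cH : ℝ) (Z₁ : ℝ → Ω → ℝ) (n : ℕ) (t : ℝ) (ω : Ω) : ℝ :=
  cH * ∫ s in (0 : ℝ)..t, (Y3e H (epsSeq H β n) Z₁ s ω) ^ 2

/-- `X^{2,H,n}_t = c(H) ∫_0^t Y^{1,H,n}_s Y^{3,H,n}_s ds`. -/
def X2n (H β a cH : ℝ) (Z₁ Z₂ Z₃ : ℝ → Ω → ℝ) (n : ℕ) (t : ℝ) (ω : Ω) : ℝ :=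
  cH * ∫ s in (0 : ℝ)..t, Y1n H β a Z₂ Z₃ n s ω * Y3e H (epsSeq H β n) Z₁ s ω

/-- Pathwise version of the regularized Wiener integral
`Y^ε_s = ∫_{-∞}^s (s+ε-x)^{H/2-1} dB(x)` (integration by parts). -/
def Yfull (H ε : ℝ) (B : ℝ → Ω → ℝ) (s : ℝ) (ω : Ω) : ℝ :=
  ε ^ (H / 2 - 1) * B s ω - ∫ x in Iic s, (1 - H / 2) * (s + ε - x) ^ (H / 2 - 2) * B x ω

/-- `X` is (a version of) the double Wiener–Itô integral
`X^{3,H}_t = c(H) ∫_0^t∫_0^t (∫_{x₁∨x₂}^t (s-x₁)^{H/2-1}(s-x₂)^{H/2-1} ds) dB(x₁)dB(x₂)`,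
characterized as the `L²(P)`-limit, as `ε → 0⁺`, of its regularizations
`c(H) ∫_0^t [ (Y^{3,ε}_s)² - ∫_0^s (s+ε-x)^{H-2} dx ] ds`, where
`Y^{3,ε}_s = ∫_0^s (s+ε-x)^{H/2-1} dB(x)` and the subtracted term is the diagonal
trace `E[(Y^{3,ε}_s)²]`. -/
def IsX3 (P : Measure Ω) (H cH : ℝ) (B X : ℝ → Ω → ℝ) : Prop :=
  ∀ t : ℝ, 0 ≤ t → Tendsto (fun ε : ℝ =>
      ∫ ω, (cH * (∫ s in (0 : ℝ)..t,
        ((Y3e H ε B s ω) ^ 2 - ∫ x in (0 : ℝ)..s, (s + ε - x) ^ (H - 2))) - X t ω) ^ 2 ∂P)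
    (nhdsWithin 0 (Ioi 0)) (nhds 0)

/-- `X` is (a version of) the double Wiener–Itô integral
`X^{2,H}_t = c(H) ∫_{-∞}^0 ∫_0^t (∫_{x₂}^t (s-x₁)^{H/2-1}(s-x₂)^{H/2-1} ds) dB(x₂)dB(x₁)`,
characterized as the `L²(P)`-limit, as `ε → 0⁺`, of
`c(H) ∫_0^t Y^{1,H}_s Y^{3,ε}_s ds` (no trace term appears here, the two Wiener
integrals involving increments of `B` on disjoint intervals). -/
def IsX2 (P : Measure Ω) (H cH : ℝ) (B X : ℝ → Ω → ℝ) : Prop :=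
  ∀ t : ℝ, 0 ≤ t → Tendsto (fun ε : ℝ =>
      ∫ ω, (cH * (∫ s in (0 : ℝ)..t, Y1 H B s ω * Y3e H ε B s ω) - X t ω) ^ 2 ∂P)
    (nhdsWithin 0 (Ioi 0)) (nhds 0)

/-- `X` is (a version of) the Rosenblatt process
`X^H_t = c(H) ∫_ℝ∫_ℝ (∫_0^t (s-x₁)₊^{H/2-1}(s-x₂)₊^{H/2-1} ds) dB(x₁)dB(x₂)`,
characterized as the `L²(P)`-limit, as `ε → 0⁺`, of its regularizations
`c(H) ∫_0^t [ (Y^ε_s)² - ε^{H-1}/(1-H) ] ds`, where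
`Y^ε_s = ∫_{-∞}^s (s+ε-x)^{H/2-1} dB(x)` and `ε^{H-1}/(1-H) = E[(Y^ε_s)²]` is the
diagonal trace term. -/
def IsRosenblatt (P : Measure Ω) (H cH : ℝ) (B X : ℝ → Ω → ℝ) : Prop :=
  ∀ t : ℝ, 0 ≤ t → Tendsto (fun ε : ℝ =>
      ∫ ω, (cH * (∫ s in (0 : ℝ)..t,
        ((Yfull H ε B s ω) ^ 2 - ε ^ (H - 1) / (1 - H))) - X t ω) ^ 2 ∂P)
    (nhdsWithin 0 (Ioi 0)) (nhds 0)

/- The integrand is dominated, uniformly in `s ≥ 0`, by `g(u) |√|u| B(1/u)|` with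
`g(u) = (1 - H/2) |u|^{-(H+1)/2}`, and `√|u| B(1/u)` is a standard Gaussian for every `u < 0`.
So the supremum over `s` is at most the single random variable
`L = ∫_{-ε}^0 g(u) |√|u| B(1/u)| du`.
Jensen's inequality for the finite measure `g(u) du` and Tonelli give
`E[L^p] ≤ m_p (∫_{-ε}^0 g)^p = m_p (C ε^{(1-H)/2})^p`, with `C = (2-H)/(1-H)` and `m_p` the
`p`-th absolute Gaussian moment, and Markov's inequality bounds the probability by
`m_p C^p (ε_n^{(1-H)/2} / α_n)^p`, which is at most `m_p C^p n^{-θ p}` with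
`θ = β(1-H)/(2-H) - (1/2 - β)`. The hypothesis on `β` says exactly that `θ > 0`, so choosing
`p > q/θ` gives `o(n^{-q})`. -/

theorem exists_measurable_uncurry_ae_eq {P : Measure Ω} {X : ℝ → Ω → ℝ}
    (hX : ∀ t, Measurable (X t)) (hc : ∀ᵐ ω ∂P, Continuous fun t => X t ω) :
    ∃ Y : ℝ → Ω → ℝ,
      Measurable (Function.uncurry Y) ∧ ∀ᵐ ω ∂P, ∀ t, Y t ω = X t ω := by
  classical
  set N := toMeasurable P {ω | ¬Continuous fun t => X t ω}
  have hN : MeasurableSet N := measurableSet_toMeasurable _ _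
  refine ⟨fun t ω => if ω ∈ N then 0 else X t ω, ?_, ?_⟩
  · refine measurable_uncurry_of_continuous_of_measurable (fun ω => ?_)
      (fun t => Measurable.ite hN measurable_const (hX t))
    by_cases hω : ω ∈ N
    · simp only [hω, if_true]; exact continuous_const
    · simp only [hω, if_false]
      simpa using mt (fun h => subset_toMeasurable P _ h) hω
  · have : P N = 0 := by rw [measure_toMeasurable]; exact ae_iff.1 hc
    filter_upwards [measure_eq_zero_iff_ae_notMem.1 this] with ω hω t
    simp [hω]

theorem lintegral_rpow_le_lintegral_rpow_mul_measure_univ {α : Type*} [MeasurableSpace α]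
    {ν : Measure α} {f : α → ℝ≥0∞} (hf : AEMeasurable f ν) {p : ℝ} (hp : 1 ≤ p) :
    (∫⁻ u, f u ∂ν) ^ p ≤ (∫⁻ u, f u ^ p ∂ν) * ν univ ^ (p - 1) := by
  have h := eLpNorm'_le_eLpNorm'_mul_rpow_measure_univ one_pos hp hf.aestronglyMeasurable
  simp only [eLpNorm'_eq_lintegral_enorm, enorm_eq_self, ENNReal.rpow_one, div_one] at h
  have hp0 : 0 ≤ p := by linarith
  calc (∫⁻ u, f u ∂ν) ^ p
      ≤ ((∫⁻ u, f u ^ p ∂ν) ^ (1 / p) * ν univ ^ (1 - 1 / p)) ^ p := by gcongr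
    _ = (∫⁻ u, f u ^ p ∂ν) * ν univ ^ (p - 1) := by
      rw [ENNReal.mul_rpow_of_nonneg _ _ hp0, ← ENNReal.rpow_mul, ← ENNReal.rpow_mul]
      congr 2
      · field_simp; simp
      · field_simp

theorem lintegral_rpow_lintegral_le {α β : Type*} [MeasurableSpace α] [MeasurableSpace β]
    {ν : Measure α} [IsFiniteMeasure ν] {P : Measure β} [SFinite P]
    {X : α → β → ℝ≥0∞}
    (hX : Measurable (Function.uncurry X)) {p : ℝ} (hp : 1 ≤ p) {M : ℝ≥0∞}
    (hM : ∀ᵐ u ∂ν, ∫⁻ ω, X u ω ^ p ∂P ≤ M) :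
    ∫⁻ ω, (∫⁻ u, X u ω ∂ν) ^ p ∂P ≤ M * ν univ ^ p := by
  have hXp : Measurable (Function.uncurry fun u ω => X u ω ^ p) := hX.pow_const p
  have hsec : ∀ ω, Measurable fun u => X u ω := fun ω =>
    hX.comp (measurable_id.prodMk measurable_const)
  calc ∫⁻ ω, (∫⁻ u, X u ω ∂ν) ^ p ∂P
      ≤ ∫⁻ ω, (∫⁻ u, X u ω ^ p ∂ν) * ν univ ^ (p - 1) ∂P :=
        lintegral_mono fun ω =>
          lintegral_rpow_le_lintegral_rpow_mul_measure_univ (hsec ω).aemeasurable hp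
    _ = (∫⁻ u, ∫⁻ ω, X u ω ^ p ∂P ∂ν) * ν univ ^ (p - 1) := by
        rw [lintegral_mul_const _ hXp.lintegral_prod_left,
          lintegral_lintegral_swap hXp.aemeasurable]
    _ ≤ (∫⁻ _, M ∂ν) * ν univ ^ (p - 1) := by gcongr ?_ * _; exact lintegral_mono_ae hM
    _ = M * ν univ ^ p := by
        rw [lintegral_const, mul_assoc]
        have h := ENNReal.rpow_add_of_nonneg (x := ν univ) 1 (p - 1) zero_le_one (by linarith)
        rw [add_sub_cancel, ENNReal.rpow_one] at h
        rw [h]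

def gaussianAbsMoment (p : ℝ) : ℝ≥0∞ := ∫⁻ x, ‖x‖ₑ ^ p ∂gaussianReal 0 1

theorem gaussianAbsMoment_ne_top {p : ℝ} (hp : 0 ≤ p) : gaussianAbsMoment p ≠ ⊤ := by
  rcases hp.eq_or_lt with rfl | hp
  · simp [gaussianAbsMoment]
  have h := lintegral_rpow_enorm_lt_top_of_eLpNorm_lt_top (p := ENNReal.ofReal p)
    (by simpa using hp) ENNReal.ofReal_ne_top
    (memLp_id_gaussianReal' (μ := 0) (v := 1) _ ENNReal.ofReal_ne_top).eLpNorm_lt_top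
  simpa [gaussianAbsMoment, ENNReal.toReal_ofReal hp.le] using h.ne

theorem lintegral_enorm_inv_sqrt_mul_rpow_eq_gaussianAbsMoment {P : Measure Ω} {Y : Ω → ℝ}
    (hY : Measurable Y) {v : ℝ≥0} (hv : v ≠ 0) (hmap : P.map Y = gaussianReal 0 v) (p : ℝ) :
    ∫⁻ ω, ‖(√(v : ℝ))⁻¹ * Y ω‖ₑ ^ p ∂P = gaussianAbsMoment p := by
  have hstd : (gaussianReal 0 v).map ((√(v : ℝ))⁻¹ * ·) = gaussianReal 0 1 := by
    rw [gaussianReal_map_const_mul, mul_zero]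
    congr
    ext
    simp [inv_pow, hv]
  rw [gaussianAbsMoment, ← hstd, ← hmap, Measure.map_map (measurable_const_mul _) hY,
    lintegral_map (by fun_prop) ((measurable_const_mul _).comp hY)]
  rfl

theorem abs_kdf_one_div_mul_le {H s u : ℝ} (hH : H ≤ 2) (hs : 0 ≤ s) (hu : u < 0) (b : ℝ) :
    |kdf H s (1 / u) * (u ^ 3)⁻¹ * (u * b)| ≤
      (1 - H / 2) * |u| ^ (-((H + 1) / 2)) * |√|u| * b| := by
  set x := |u| with hx_def
  have hx : 0 < x := abs_pos.2 hu.ne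
  have hinv : 1 / u = -x⁻¹ := by rw [hx_def, abs_of_neg hu, one_div, inv_neg, neg_neg]
  have hc : 0 ≤ 1 - H / 2 := by linarith
  have hkdf_nonneg : 0 ≤ kdf H s (1 / u) := by
    rw [kdf, hinv, sub_neg_eq_add]; exact mul_nonneg hc (by positivity)
  have hkdf : kdf H s (1 / u) ≤ (1 - H / 2) * x ^ (2 - H / 2) := by
    rw [kdf, hinv, sub_neg_eq_add]
    gcongr
    calc (s + x⁻¹) ^ (H / 2 - 2) ≤ x⁻¹ ^ (H / 2 - 2) :=
          Real.rpow_le_rpow_of_nonpos (by positivity) (by linarith) (by linarith)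
      _ = x ^ (2 - H / 2) := by rw [Real.inv_rpow hx.le, ← Real.rpow_neg hx.le, neg_sub]
  have hpow : x ^ (2 - H / 2) * (x ^ 3)⁻¹ * x = x ^ (-((H + 1) / 2)) * √x := by
    have e3 : (x ^ 3)⁻¹ = x ^ (-(3 : ℝ)) := by rw [Real.rpow_neg hx.le]; norm_cast
    rw [e3, Real.sqrt_eq_rpow, ← Real.rpow_add hx, ← Real.rpow_add_one hx.ne',
      ← Real.rpow_add hx]
    ring_nf
  calc |kdf H s (1 / u) * (u ^ 3)⁻¹ * (u * b)|
      = kdf H s (1 / u) * (x ^ 3)⁻¹ * x * |b| := by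
        rw [abs_mul, abs_mul, abs_mul, abs_inv, abs_pow, abs_of_nonneg hkdf_nonneg]
        ring
    _ ≤ (1 - H / 2) * x ^ (2 - H / 2) * (x ^ 3)⁻¹ * x * |b| := by gcongr
    _ = (1 - H / 2) * (x ^ (2 - H / 2) * (x ^ 3)⁻¹ * x) * |b| := by ring
    _ = (1 - H / 2) * x ^ (-((H + 1) / 2)) * |√x * b| := by
        rw [hpow, abs_mul, abs_of_nonneg (Real.sqrt_nonneg x)]
        ring

theorem lintegral_Ioo_neg_ofReal_abs_rpow_neg {ε r : ℝ} (hε : 0 ≤ ε) (hr : r < 1) :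
    ∫⁻ u in Ioo (-ε) 0, ENNReal.ofReal (|u| ^ (-r)) =
      ENNReal.ofReal (ε ^ (1 - r) / (1 - r)) := by
  have hint : IntervalIntegrable (fun u : ℝ => |u| ^ (-r)) volume (-ε) 0 := by
    have h := (intervalIntegral.intervalIntegrable_rpow' (a := 0) (b := ε)
      (by linarith : -1 < -r)).comp_sub_left 0
    simp only [sub_zero, zero_sub] at h
    refine h.symm.congr fun u hu => ?_
    rw [uIoc_of_le (by linarith)] at hu
    simp only [abs_of_nonpos hu.2]
  have hvalue : ∫ u in (-ε)..0, |u| ^ (-r) = ε ^ (1 - r) / (1 - r) := by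
    calc ∫ u in (-ε)..0, |u| ^ (-r) = ∫ u in (-ε)..0, |-u| ^ (-r) := by simp only [abs_neg]
      _ = ∫ u in (0 : ℝ)..ε, |u| ^ (-r) := by
        rw [intervalIntegral.integral_comp_neg (fun u => |u| ^ (-r)), neg_zero, neg_neg]
      _ = ∫ u in (0 : ℝ)..ε, u ^ (-r) := by
        refine intervalIntegral.integral_congr fun u hu => ?_
        rw [uIcc_of_le hε] at hu
        simp only [abs_of_nonneg hu.1]
      _ = ε ^ (1 - r) / (1 - r) := by
        rw [integral_rpow (Or.inl (by linarith)), Real.zero_rpow (by linarith), sub_zero,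
          neg_add_eq_sub]
  rw [← hvalue, intervalIntegral.integral_of_le (by linarith), integral_Ioc_eq_integral_Ioo,
    ofReal_integral_eq_lintegral_ofReal (hint.1.mono_set Ioo_subset_Ioc_self)
      (ae_of_all _ fun u => by positivity)]

theorem ofReal_abs_integral_kdf_le {H s ε : ℝ} (hH : H ≤ 2) (hs : 0 ≤ s) (hε : 0 ≤ ε)
    (b : ℝ → ℝ) :
    ENNReal.ofReal |∫ u in (-ε)..0, kdf H s (1 / u) * (u ^ 3)⁻¹ * (u * b (1 / u))| ≤
      ∫⁻ u in Ioo (-ε) 0,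
        ENNReal.ofReal ((1 - H / 2) * |u| ^ (-((H + 1) / 2))) * ‖√|u| * b (1 / u)‖ₑ := by
  rw [intervalIntegral.integral_of_le (by linarith), ← Real.enorm_eq_ofReal_abs]
  calc _ ≤ ∫⁻ u in Ioc (-ε) 0, ‖kdf H s (1 / u) * (u ^ 3)⁻¹ * (u * b (1 / u))‖ₑ :=
        enorm_integral_le_lintegral_enorm _
    _ = ∫⁻ u in Ioo (-ε) 0, ‖kdf H s (1 / u) * (u ^ 3)⁻¹ * (u * b (1 / u))‖ₑ :=
        setLIntegral_congr Ioo_ae_eq_Ioc.symm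
    _ ≤ _ := setLIntegral_mono' measurableSet_Ioo fun u hu => by
        have hc : 0 ≤ 1 - H / 2 := by linarith
        rw [Real.enorm_eq_ofReal_abs, Real.enorm_eq_ofReal_abs,
          ← ENNReal.ofReal_mul (by positivity)]
        exact ENNReal.ofReal_le_ofReal (abs_kdf_one_div_mul_le hH hs hu.2 _)

theorem IsTwoSidedBM.lintegral_enorm_sqrt_abs_mul_rpow {P : Measure Ω} {B : ℝ → Ω → ℝ}
    (hB : IsTwoSidedBM P B) {u : ℝ} (hu : u < 0) (p : ℝ) :
    ∫⁻ ω, ‖√|u| * B (1 / u) ω‖ₑ ^ p ∂P = gaussianAbsMoment p := by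
  obtain ⟨hBmeas, hB0, -, hBlaw, -⟩ := hB
  have hvar : (0 - 1 / u) = |u|⁻¹ := by rw [abs_of_neg hu, zero_sub, one_div, inv_neg]
  have hv : (0 - 1 / u).toNNReal ≠ 0 := by
    rw [hvar]; exact (Real.toNNReal_pos.2 (inv_pos.2 (abs_pos.2 hu.ne))).ne'
  have hsqrt : (√((0 - 1 / u).toNNReal : ℝ))⁻¹ = √|u| := by
    rw [Real.coe_toNNReal _ (by rw [hvar]; positivity), hvar, Real.sqrt_inv, inv_inv]
  rw [← lintegral_enorm_inv_sqrt_mul_rpow_eq_gaussianAbsMoment ((hBmeas 0).sub (hBmeas _)) hv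
    (hBlaw _ _ (one_div_neg.2 hu).le) p, hsqrt]
  refine lintegral_congr_ae ?_
  filter_upwards [hB0] with ω h0
  rw [Pi.sub_apply, h0, zero_sub, mul_neg, enorm_neg]

theorem measure_lt_iSup_abs_integral_le (P : Measure Ω) [SFinite P]
    {H T ε α p : ℝ} (hH : H < 1) (hε : 0 < ε) (hα : 0 < α) (hp : 1 ≤ p)
    {B : ℝ → Ω → ℝ} (hB : IsTwoSidedBM P B) :
    P {ω | α < ⨆ s ∈ Icc (0 : ℝ) T,
        |∫ u in (-ε)..0, kdf H s (1 / u) * (u ^ 3)⁻¹ * B3 B u ω|} ≤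
      gaussianAbsMoment p * ENNReal.ofReal ((2 - H) / (1 - H) * ε ^ ((1 - H) / 2) / α) ^ p := by
  -- Tonelli needs `(u, ω) ↦ B (1 / u) ω` jointly measurable, which only a continuous
  -- modification of `B` guarantees.
  obtain ⟨Y, hYmeas, hYB⟩ := exists_measurable_uncurry_ae_eq hB.1 hB.2.2.1
  set g : ℝ → ℝ≥0∞ := fun u => ENNReal.ofReal ((1 - H / 2) * |u| ^ (-((H + 1) / 2)))
  set ν := (volume.restrict (Ioo (-ε) 0)).withDensity g
  have hν : ν univ = ENNReal.ofReal ((2 - H) / (1 - H) * ε ^ ((1 - H) / 2)) := by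
    have hexp : 1 - (H + 1) / 2 = (1 - H) / 2 := by ring
    rw [withDensity_apply _ MeasurableSet.univ, Measure.restrict_univ]
    simp only [g, ENNReal.ofReal_mul (by linarith : 0 ≤ 1 - H / 2)]
    rw [lintegral_const_mul _ (by fun_prop),
      lintegral_Ioo_neg_ofReal_abs_rpow_neg hε.le (by linarith),
      ← ENNReal.ofReal_mul (by linarith), hexp]
    congr 1
    field_simp
  have : IsFiniteMeasure ν := ⟨by rw [hν]; exact ENNReal.ofReal_lt_top⟩
  set X : ℝ → Ω → ℝ≥0∞ := fun u ω => ‖√|u| * Y (1 / u) ω‖ₑ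
  have hX : Measurable (Function.uncurry X) :=
    (measurable_fst.abs.sqrt.mul
      (hYmeas.comp ((measurable_fst.const_div 1).prodMk measurable_snd))).enorm
  set L : Ω → ℝ≥0∞ := fun ω => ∫⁻ u, X u ω ∂ν
  have hmoment : ∀ᵐ u ∂ν, ∫⁻ ω, X u ω ^ p ∂P ≤ gaussianAbsMoment p := by
    filter_upwards [(withDensity_absolutelyContinuous _ _).ae_le
      (ae_restrict_mem measurableSet_Ioo)] with u hu
    rw [← hB.lintegral_enorm_sqrt_abs_mul_rpow hu.2 p]
    refine (lintegral_congr_ae ?_).le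
    filter_upwards [hYB] with ω hω
    simp only [X, hω]
  have hevent : ∀ᵐ ω ∂P, α < ⨆ s ∈ Icc (0 : ℝ) T,
        |∫ u in (-ε)..0, kdf H s (1 / u) * (u ^ 3)⁻¹ * B3 B u ω| →
      ENNReal.ofReal α ≤ L ω := by
    filter_upwards [hYB] with ω hω hlt
    by_cases hLtop : L ω = ⊤
    · simp [hLtop]
    have hL : L ω = ∫⁻ u in Ioo (-ε) 0, g u * ‖√|u| * B (1 / u) ω‖ₑ := by
      have hg : Measurable g := by fun_prop
      have hXω : Measurable fun u => X u ω := hX.comp (measurable_id.prodMk measurable_const)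
      change ∫⁻ u, X u ω ∂(volume.restrict (Ioo (-ε) 0)).withDensity g = _
      rw [lintegral_withDensity_eq_lintegral_mul _ hg hXω]
      simp only [X, hω, Pi.mul_apply]
    have hsup : (⨆ s ∈ Icc (0 : ℝ) T,
        |∫ u in (-ε)..0, kdf H s (1 / u) * (u ^ 3)⁻¹ * B3 B u ω|) ≤ (L ω).toReal := by
      refine Real.iSup_le (fun s => Real.iSup_le (fun hs => ?_) ENNReal.toReal_nonneg)
        ENNReal.toReal_nonneg
      rw [← ENNReal.ofReal_le_iff_le_toReal hLtop, hL]
      exact ofReal_abs_integral_kdf_le (by linarith) hs.1 hε.le (fun t => B t ω)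
    exact (ENNReal.ofReal_le_iff_le_toReal hLtop).2 (hlt.trans_le hsup).le
  have hα' : ENNReal.ofReal α ^ p ≠ 0 := by positivity
  calc P _ ≤ P {ω | ENNReal.ofReal α ^ p ≤ L ω ^ p} := by
        refine measure_mono_ae ?_
        filter_upwards [hevent] with ω h hω
        exact ENNReal.rpow_le_rpow (h hω) (by linarith)
    _ ≤ (∫⁻ ω, L ω ^ p ∂P) / ENNReal.ofReal α ^ p :=
        meas_ge_le_lintegral_div (hX.lintegral_prod_left'.pow_const p).aemeasurable hα'
          (by finiteness)
    _ ≤ gaussianAbsMoment p * ν univ ^ p / ENNReal.ofReal α ^ p := by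
        gcongr; exact lintegral_rpow_lintegral_le hX hp hmoment
    _ = _ := by
        rw [mul_div_assoc, ← ENNReal.div_rpow_of_nonneg _ _ (by linarith), hν,
          ← ENNReal.ofReal_div_of_pos hα]

theorem natCast_rpow_le_alphaRate (β : ℝ) {n : ℕ} (hn : 3 ≤ n) :
    (n : ℝ) ^ (-(1 / 2 - β)) ≤ alphaRate β n := by
  have hn' : (3 : ℝ) ≤ n := by exact_mod_cast hn
  have hlog : 1 ≤ Real.log n := by
    rw [Real.le_log_iff_exp_le (by linarith)]
    linarith [Real.exp_one_lt_d9]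
  rw [alphaRate]
  exact le_mul_of_one_le_right (by positivity) (Real.one_le_rpow hlog (by norm_num))

theorem epsSeq_rpow_div_alphaRate_le {H : ℝ} (β : ℝ) (hH : H ≠ 2) {n : ℕ} (hn : 3 ≤ n) :
    epsSeq H β n ^ ((1 - H) / 2) / alphaRate β n ≤
      (n : ℝ) ^ (-(β * (1 - H) / (2 - H) - (1 / 2 - β))) := by
  have hn0 : (0 : ℝ) < n := by positivity
  have heps : epsSeq H β n ^ ((1 - H) / 2) = (n : ℝ) ^ (-(β * (1 - H) / (2 - H))) := by
    rw [epsSeq, ← Real.rpow_mul hn0.le]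
    congr 1
    have : 2 - H ≠ 0 := sub_ne_zero.2 (Ne.symm hH)
    field_simp
  calc epsSeq H β n ^ ((1 - H) / 2) / alphaRate β n
      ≤ (n : ℝ) ^ (-(β * (1 - H) / (2 - H))) / (n : ℝ) ^ (-(1 / 2 - β)) := by
        rw [heps]
        gcongr
        exact natCast_rpow_le_alphaRate β hn
    _ = _ := by rw [← Real.rpow_sub hn0]; ring_nf

theorem isLittleO_natCast_rpow_neg_of_le {f : ℕ → ℝ} {K s q : ℝ} (hqs : q < s)
    (hf : ∀ᶠ n : ℕ in atTop, ‖f n‖ ≤ K * (n : ℝ) ^ (-s)) :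
    f =o[atTop] fun n : ℕ => (n : ℝ) ^ (-q) := by
  have hO : f =O[atTop] fun n : ℕ => (n : ℝ) ^ (-s) := by
    refine IsBigO.of_bound K ?_
    filter_upwards [hf] with n hn
    rwa [Real.norm_of_nonneg (Real.rpow_nonneg n.cast_nonneg _)]
  refine hO.trans_isLittleO (isLittleO_of_tendsto' ?_ ?_)
  · filter_upwards [eventually_ge_atTop 1] with n hn h0
    exact absurd h0 (Real.rpow_pos_of_pos (by exact_mod_cast hn) _).ne'
  · refine ((tendsto_rpow_neg_atTop (sub_pos.2 hqs)).comp tendsto_natCast_atTop_atTop).congr' ?_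
    filter_upwards [eventually_ge_atTop 1] with n hn
    have hn0 : (0 : ℝ) < n := by exact_mod_cast hn
    rw [Function.comp_apply, ← Real.rpow_sub hn0]
    ring_nf

theorem toReal_measure_lt_iSup_abs_integral_le (P : Measure Ω) [SFinite P]
    {H T β p : ℝ} (hH : H < 1) (hp : 1 ≤ p) {B : ℝ → Ω → ℝ} (hB : IsTwoSidedBM P B)
    {n : ℕ} (hn : 3 ≤ n) :
    (P {ω | alphaRate β n < ⨆ s ∈ Icc (0 : ℝ) T,
        |∫ u in (-(epsSeq H β n))..(0 : ℝ), kdf H s (1 / u) * (u ^ 3)⁻¹ * B3 B u ω|}).toReal ≤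
      (gaussianAbsMoment p).toReal * ((2 - H) / (1 - H)) ^ p *
        (n : ℝ) ^ (-((β * (1 - H) / (2 - H) - (1 / 2 - β)) * p)) := by
  set C := (2 - H) / (1 - H)
  set M := gaussianAbsMoment p
  have hC : 0 < C := div_pos (by linarith) (by linarith)
  have hn0 : (0 : ℝ) < n := by positivity
  have hα : 0 < alphaRate β n :=
    (Real.rpow_pos_of_pos hn0 _).trans_le (natCast_rpow_le_alphaRate β hn)
  have hε : 0 < epsSeq H β n := Real.rpow_pos_of_pos hn0 _
  have hratio := epsSeq_rpow_div_alphaRate_le β (by linarith : H ≠ 2) hn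
  calc _ ≤ (M * ENNReal.ofReal (C * epsSeq H β n ^ ((1 - H) / 2) / alphaRate β n) ^ p).toReal :=
        ENNReal.toReal_mono
          (ENNReal.mul_ne_top (gaussianAbsMoment_ne_top (by linarith)) (by finiteness))
          (measure_lt_iSup_abs_integral_le P hH hε hα hp hB)
    _ = M.toReal * (C * (epsSeq H β n ^ ((1 - H) / 2) / alphaRate β n)) ^ p := by
        rw [ENNReal.toReal_mul, ← ENNReal.toReal_rpow, ENNReal.toReal_ofReal (by positivity),
          mul_div_assoc]
    _ ≤ M.toReal * (C * (n : ℝ) ^ (-(β * (1 - H) / (2 - H) - (1 / 2 - β)))) ^ p := by gcongr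
    _ = _ := by
        rw [Real.mul_rpow (by positivity) (by positivity), ← Real.rpow_mul hn0.le]
        ring_nf

theorem lemma_D1_general
    (P : Measure Ω) [IsProbabilityMeasure P]
    (H T β : ℝ) (hH' : H < 1)
    (hβl : (1 - H / 2) / (3 - 2 * H) < β)
    (B : ℝ → Ω → ℝ) (hB : IsTwoSidedBM P B) :
    ∀ q : ℝ, 0 < q →
      (fun n : ℕ => (P {ω | alphaRate β n <
          ⨆ s ∈ Icc (0 : ℝ) T,
            |∫ u in (-(epsSeq H β n))..(0 : ℝ),
              kdf H s (1 / u) * (u ^ 3)⁻¹ * B3 B u ω|}).toReal)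
      =o[atTop] fun n : ℕ => (n : ℝ) ^ (-q) := by
  intro q _
  set θ := β * (1 - H) / (2 - H) - (1 / 2 - β)
  have hθ : 0 < θ := by
    rw [div_lt_iff₀ (by linarith)] at hβl
    rw [sub_pos, lt_div_iff₀ (by linarith)]
    nlinarith
  set p := max 1 ((q + 1) / θ)
  have hθp : q < θ * p := by
    have h := le_max_right 1 ((q + 1) / θ)
    rw [div_le_iff₀ hθ] at h
    linarith
  refine isLittleO_natCast_rpow_neg_of_le hθp
    (K := (gaussianAbsMoment p).toReal * ((2 - H) / (1 - H)) ^ p) ?_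
  filter_upwards [eventually_ge_atTop 3] with n hn
  rw [Real.norm_of_nonneg ENNReal.toReal_nonneg]
  exact toReal_measure_lt_iSup_abs_integral_le P hH' (le_max_left _ _) hB hn

/-- Lemma D1. -/
theorem lemma_D1
    (P : Measure Ω) [IsProbabilityMeasure P]
    (H T a β : ℝ) (hH : 1 / 2 < H) (hH' : H < 1) (hT : 0 < T) (ha : a < 0)
    (hβl : (1 - H / 2) / (3 - 2 * H) < β) (hβr : β < 1 / 2)
    (B : ℝ → Ω → ℝ) (hB : IsTwoSidedBM P B) :
    ∀ q : ℝ, 0 < q →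
      (fun n : ℕ => (P {ω | alphaRate β n <
          ⨆ s ∈ Icc (0 : ℝ) T,
            |∫ u in (-(epsSeq H β n))..(0 : ℝ),
              kdf H s (1 / u) * (u ^ 3)⁻¹ * B3 B u ω|}).toReal)
      =o[atTop] fun n : ℕ => (n : ℝ) ^ (-q) :=
  lemma_D1_general P H T β hH' hβl B hB
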